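/- (Proposition 6.1) Let B : ℝ → ℝ be smooth (ContDiff ℝ ⊤) with deriv B x ≠ 0 for all x, and fix n ∈ ℕ. Define operators on smooth functions g : ℝ → ℝ by (h g)(x) = (B x / deriv B x)·(deriv g x) − (n/2)·g x, (e g)(x) = (deriv g x)/(deriv B x), and (f g)(x) = ((B x)²/(deriv B x))·(deriv g x) − n·(B x)·(g x). Then for every smooth g : ℝ → ℝ and every x ∈ ℝ: e(f g)(x) − f(e g)(x) = 2·(h g)(x), h(e g)(x) − e(h g)(x) = −(e g)(x), and h(f g)(x) − f(h g)(x) = (f g)(x); i.e., (h, e, f) realizes the sl(2,ℝ) commutation relations on smooth functions. -/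

import Mathlib

/-- `(h g)(x) = (B x / B' x)·g'(x) − (n/2)·g(x)`. -/
noncomputable def genH (B : ℝ → ℝ) (n : ℕ) (g : ℝ → ℝ) : ℝ → ℝ :=
  fun x => (B x / deriv B x) * deriv g x - ((n : ℝ) / 2) * g x

/-- `(e g)(x) = g'(x) / B'(x)`. -/
noncomputable def genE (B : ℝ → ℝ) (g : ℝ → ℝ) : ℝ → ℝ :=
  fun x => deriv g x / deriv B x

/-- `(f g)(x) = ((B x)² / B'(x))·g'(x) − n·B(x)·g(x)`. -/
noncomputable def genF (B : ℝ → ℝ) (n : ℕ) (g : ℝ → ℝ) : ℝ → ℝ :=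
  fun x => ((B x) ^ 2 / deriv B x) * deriv g x - (n : ℝ) * B x * g x

/-- Proposition 6.1: for a smooth function `B` with nonvanishing derivative, the
operators `h`, `e`, `f` realize the `sl(2,ℝ)` commutation relations
`[e,f] = 2h`, `[h,e] = −e`, `[h,f] = f` on smooth functions. -/
theorem sl2_relations_general (B : ℝ → ℝ) (hB : ContDiff ℝ (⊤ : ℕ∞) B)
    (hB' : ∀ x, deriv B x ≠ 0) (n : ℕ) (g : ℝ → ℝ) (hg : ContDiff ℝ (⊤ : ℕ∞) g) (x : ℝ) :
    genE B (genF B n g) x - genF B n (genE B g) x = 2 * genH B n g x ∧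
    genH B n (genE B g) x - genE B (genH B n g) x = - genE B g x ∧
    genH B n (genF B n g) x - genF B n (genH B n g) x = genF B n g x := by
  have hBd : Differentiable ℝ B := hB.differentiable (by simp)
  have hB'd : Differentiable ℝ (deriv B) :=
    ((contDiff_infty_iff_deriv.mp (hB.of_le (by simp))).2).differentiable (by simp)
  have hgd : Differentiable ℝ g := hg.differentiable (by simp)
  have hg'd : Differentiable ℝ (deriv g) :=
    ((contDiff_infty_iff_deriv.mp (hg.of_le (by simp))).2).differentiable (by simp)
  have HB : HasDerivAt B (deriv B x) x := (hBd x).hasDerivAt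
  have HB' : HasDerivAt (deriv B) (deriv (deriv B) x) x := (hB'd x).hasDerivAt
  have Hg : HasDerivAt g (deriv g x) x := (hgd x).hasDerivAt
  have Hg' : HasDerivAt (deriv g) (deriv (deriv g) x) x := (hg'd x).hasDerivAt
  have hE := ((Hg'.div HB' (hB' x))).deriv
  have hH := ((((HB.div HB' (hB' x)).mul Hg').sub
      (Hg.const_mul ((n : ℝ) / 2)))).deriv
  have hF := (((((HB.pow 2).div HB' (hB' x)).mul Hg').sub
      ((HB.const_mul (n : ℝ)).mul Hg))).deriv
  simp only [Pi.div_def, Pi.mul_def, Pi.sub_def, Pi.pow_def] at hE hH hF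
  unfold genE genF genH
  rw [hE, hF, hH]
  beta_reduce
  norm_num
  set b := B x
  set b1 := deriv B x
  set b2 := deriv (deriv B) x
  set g0 := g x
  set g1 := deriv g x
  set g2 := deriv (deriv g) x
  have hb1 : b1 ≠ 0 := hB' x
  refine ⟨?_, ?_, ?_⟩ <;> (field_simp; ring)
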